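/- For every t ∈ ℝ, the genus-3 free energy of a point evaluated at qₙ = Tₙ equals F₃ = (1/82944)·T₇ + (77/414720)·T₂·T₆ + (503/1451520)·T₃·T₅ + (17/11520)·T₂²·T₅ + (607/2903040)·T₄² + (1121/241920)·T₂·T₃·T₄ + (53/6912)·T₂³·T₄ + (583/580608)·T₃³ + (205/13824)·T₂²·T₃² + (193/6912)·T₂⁴·T₃ + (245/20736)·T₂⁶ = −(656431/22265110462464)·exp(−3t). -/
import Mathlib


/-- `α₀ = 1` and, for `n ≥ 1`, `αₙ = ((-1)ⁿ/(8ⁿ·n!))·∏_{ℓ=1}^{n}(2ℓ-1)²`. -/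
noncomputable def alph (n : ℕ) : ℝ :=
  ((-1) ^ n / (8 ^ n * Nat.factorial n)) * ∏ ℓ ∈ Finset.range n, ((2 * (ℓ : ℝ) + 1)) ^ 2

/-- The inputs of Givental's formula for ℙ¹: `T₀ = T₁ = 0` and, for `n ≥ 2`,
`Tₙ = −(α_{n-1}/2^{n-1})·exp(−(n−1)·t/2)`. -/
noncomputable def Tcoord (t : ℝ) (n : ℕ) : ℝ :=
  if n ≤ 1 then 0
  else -(alph (n - 1) / 2 ^ (n - 1)) * Real.exp (-((n : ℝ) - 1) * t / 2)

/-- For every real `t`, the genus-3 free energy of a point evaluated at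
`qₙ = Tₙ` equals `−(656431/22265110462464)·exp(−3t)`. -/
theorem stmt17 (t : ℝ) :
    (1 / 82944) * Tcoord t 7 +
      (77 / 414720) * Tcoord t 2 * Tcoord t 6 +
      (503 / 1451520) * Tcoord t 3 * Tcoord t 5 +
      (17 / 11520) * (Tcoord t 2) ^ 2 * Tcoord t 5 +
      (607 / 2903040) * (Tcoord t 4) ^ 2 +
      (1121 / 241920) * Tcoord t 2 * Tcoord t 3 * Tcoord t 4 +
      (53 / 6912) * (Tcoord t 2) ^ 3 * Tcoord t 4 +
      (583 / 580608) * (Tcoord t 3) ^ 3 +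
      (205 / 13824) * (Tcoord t 2) ^ 2 * (Tcoord t 3) ^ 2 +
      (193 / 6912) * (Tcoord t 2) ^ 4 * Tcoord t 3 +
      (245 / 20736) * (Tcoord t 2) ^ 6 =
    -(656431 / 22265110462464) * Real.exp (-3 * t) := by
  have hk : ∀ (k : ℕ) (c : ℝ), c = -(k : ℝ) * t / 2 →
      Real.exp c = Real.exp (-(t/2)) ^ k := by
    intro k c hc
    rw [← Real.exp_nat_mul, hc]; ring_nf
  have h2 : Tcoord t 2 = (1/16) * Real.exp (-(t/2)) ^ 1 := by
    simp [Tcoord, alph]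
    rw [hk 1 _ (by push_cast; ring)]
    norm_num
  have h3 : Tcoord t 3 = -(9/512) * Real.exp (-(t/2)) ^ 2 := by
    simp [Tcoord, alph, Finset.prod_range_succ]
    rw [hk 2 _ (by push_cast; ring)]
    norm_num [Nat.factorial]; try ring
  have h4 : Tcoord t 4 = (75/8192) * Real.exp (-(t/2)) ^ 3 := by
    simp [Tcoord, alph, Finset.prod_range_succ]
    rw [hk 3 _ (by push_cast; ring)]
    norm_num [Nat.factorial]; try ring
  have h5 : Tcoord t 5 = -(3675/524288) * Real.exp (-(t/2)) ^ 4 := by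
    simp [Tcoord, alph, Finset.prod_range_succ]
    rw [hk 4 _ (by push_cast; ring)]
    norm_num [Nat.factorial]; try ring
  have h6 : Tcoord t 6 = (59535/8388608) * Real.exp (-(t/2)) ^ 5 := by
    simp [Tcoord, alph, Finset.prod_range_succ]
    rw [hk 5 _ (by push_cast; ring)]
    norm_num [Nat.factorial]; try ring
  have h7 : Tcoord t 7 = -(2401245/268435456) * Real.exp (-(t/2)) ^ 6 := by
    simp [Tcoord, alph, Finset.prod_range_succ]
    rw [hk 6 _ (by push_cast; ring)]
    norm_num [Nat.factorial]; try ring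
  have hR : Real.exp (-3 * t) = Real.exp (-(t/2)) ^ 6 :=
    hk 6 _ (by push_cast; ring)
  rw [h2, h3, h4, h5, h6, h7, hR]
  ring
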